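/- Let λ be an ℓ-core with at least one part, and let i be the residue modulo ℓ of the content of the last box of the bottom row of λ. Then every box of λ with content congruent to i mod ℓ that lies at the end of its row also lies at the end of its column (i.e., it is removable), and removing all such boxes yields an ℓ-core. -/

import Mathlib

/-- A partition: a weakly decreasing list of positive integers. -/
def IsPartition (l : List ℕ) : Prop := l.Pairwise (· ≥ ·) ∧ ∀ x ∈ l, 0 < x

/-- Hook length of the box in (0-based) row `a` and (1-based) column `c`. -/
def hook (l : List ℕ) (a c : ℕ) : ℕ :=
  (l.getD a 0 - c) + ((List.range l.length).filter (fun i => decide (a < i ∧ c ≤ l.getD i 0))).length + 1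

/-- `l` is an `ℓ`-core: no box has hook length divisible by `ℓ`. -/
def IsCore (ℓ : ℕ) (l : List ℕ) : Prop :=
  ∀ a < l.length, ∀ c, 1 ≤ c → c ≤ l.getD a 0 → ¬ (ℓ ∣ hook l a c)

/-- First-column hook lengths of `l` (the beta-numbers). -/
def betaList (l : List ℕ) : List ℕ := (List.range l.length).map (fun a => hook l a 1)

/-- Residue (mod ℓ) of the content of the rightmost box of the bottom row. -/
def bottomRes (ℓ : ℕ) (l : List ℕ) : ℤ := ((l.getD (l.length - 1) 0 : ℤ) - l.length) % ℓ

/-- Remove one box from each row whose rightmost box has the residue of the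
bottom row's rightmost box, dropping rows that become empty. -/
def removeRes (ℓ : ℕ) (l : List ℕ) : List ℕ :=
  ((List.range l.length).map (fun a =>
    if ((l.getD a 0 : ℤ) - (a + 1)) % ℓ = bottomRes ℓ l
    then l.getD a 0 - 1 else l.getD a 0)).filter (fun x => decide (0 < x))

/-!
Write `β a = λ a + (n - 1 - a)` for the beta-numbers (first-column hook lengths) of a partition
`λ` with `n` rows, and `B` for the set of them (the beads of the `ℓ`-abacus). The hook lengths
in row `a` are the differences `β a - x` over the gaps `x ∉ B` below `β a`, so `λ` is an
`ℓ`-core iff `B` is closed under `x ↦ x - ℓ` (for `x ≥ ℓ`); then also `x % ℓ ∈ B` for `x ∈ B`.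

The last box of row `a` has content `β a - n`, so the rows in question are those with
`β a ≡ m [MOD ℓ]`, where `m = λ (n - 1)` is the smallest element of `B`. No element of `B` is
congruent to `m - 1`, since its residue would be an element of `B` below `m`. Hence
`β a - 1 ∉ B`, i.e. `λ (a + 1) < λ a`: the box is removable. Removing these boxes lowers every
bead `≡ m` by one, which commutes with `x ↦ x - ℓ`, so the new beta-set is closed again; dropping
the rows that became empty lowers all beads by the same amount and keeps it closed.
-/

namespace BetaNumbers

variable {ℓ : ℕ} {l : List ℕ} {a b c v x : ℕ}

/-- `beta l a = hook l a 1` for a partition `l`, the entry of `betaList l`. -/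
def beta (l : List ℕ) (a : ℕ) : ℕ := l.getD a 0 + (l.length - 1 - a)

def betaSet (l : List ℕ) : Finset ℕ := (Finset.range l.length).image (beta l)

@[simp] lemma mem_betaSet : x ∈ betaSet l ↔ ∃ a < l.length, beta l a = x := by
  simp [betaSet]

def SubClosed (ℓ : ℕ) (s : Finset ℕ) : Prop := ∀ x ∈ s, ℓ ≤ x → x - ℓ ∈ s

lemma getD_antitone (hs : l.Pairwise (· ≥ ·)) : Antitone (l.getD · 0) := by
  intro a b hab
  show l.getD b 0 ≤ l.getD a 0
  rcases lt_or_ge b l.length with hb | hb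
  · rcases hab.eq_or_lt with rfl | hab
    · rfl
    · simp only [List.getD_eq_getElem?_getD, List.getElem?_eq_getElem hb,
        List.getElem?_eq_getElem (hab.trans hb), Option.getD_some]
      exact List.pairwise_iff_getElem.1 hs a b (hab.trans hb) hb hab
  · rw [List.getD_eq_default _ _ hb]
    exact Nat.zero_le _

lemma getD_pos (hp : IsPartition l) (ha : a < l.length) : 0 < l.getD a 0 := by
  rw [List.getD_eq_getElem?_getD, List.getElem?_eq_getElem ha, Option.getD_some]
  exact hp.2 _ (List.getElem_mem ha)

lemma beta_lt_beta (hs : l.Pairwise (· ≥ ·)) (hab : a < b) (hb : b < l.length) :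
    beta l b < beta l a := by
  have : l.getD b 0 ≤ l.getD a 0 := getD_antitone hs hab.le
  unfold beta
  omega

lemma beta_le_beta (hs : l.Pairwise (· ≥ ·)) (hab : a ≤ b) (hb : b < l.length) :
    beta l b ≤ beta l a := by
  rcases hab.eq_or_lt with rfl | hab
  · rfl
  · exact (beta_lt_beta hs hab hb).le

/-- The gap `x ∉ betaSet l` below `beta l a` with `hook l a c = beta l a - x`. -/
def hookGap (l : List ℕ) (a c : ℕ) : ℕ :=
  c - 1 + ((Finset.range l.length).filter (fun i => a < i ∧ l.getD i 0 < c)).card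

lemma hook_add_hookGap (ha : a < l.length) (hc1 : 1 ≤ c) (hc : c ≤ l.getD a 0) :
    hook l a c + hookGap l a c = beta l a := by
  have hleg : ((List.range l.length).filter (fun i => decide (a < i ∧ c ≤ l.getD i 0))).length
      = ((Finset.range l.length).filter (fun i => a < i ∧ c ≤ l.getD i 0)).card := by
    simp only [Finset.card, Finset.filter_val, Finset.range_val, Multiset.range,
      Multiset.filter_coe, Multiset.coe_card]
  have hsplit := Finset.card_filter_add_card_filter_not
    (s := (Finset.range l.length).filter (a < ·)) (fun i => c ≤ l.getD i 0)
  simp only [Finset.filter_filter, not_le] at hsplit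
  have hIoo : (Finset.range l.length).filter (a < ·) = Finset.Ioo a l.length := by
    ext i
    simp [and_comm]
  rw [hIoo, Nat.card_Ioo] at hsplit
  unfold hook hookGap beta
  omega

lemma hookGap_lt_hookGap (hc1 : 1 ≤ c) (hcv : c < v) : hookGap l a c < hookGap l a v := by
  have : ((Finset.range l.length).filter (fun i => a < i ∧ l.getD i 0 < c)).card ≤
      ((Finset.range l.length).filter (fun i => a < i ∧ l.getD i 0 < v)).card :=
    Finset.card_le_card fun i hi => by
      simp only [Finset.mem_filter, Finset.mem_range] at hi ⊢
      omega
  unfold hookGap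
  omega

lemma hookGap_notMem_betaSet (hs : l.Pairwise (· ≥ ·)) (ha : a < l.length) (hc1 : 1 ≤ c)
    (hc : c ≤ l.getD a 0) : hookGap l a c ∉ betaSet l := by
  intro hmem
  obtain ⟨b, hb, hbeta⟩ := mem_betaSet.1 hmem
  rcases le_or_gt b a with hba | hab
  · have := hook_add_hookGap ha hc1 hc
    have := beta_le_beta hs hba ha
    have : 1 ≤ hook l a c := by unfold hook; omega
    omega
  unfold hookGap beta at hbeta
  set G := (Finset.range l.length).filter (fun i => a < i ∧ l.getD i 0 < c)
  by_cases hcb : c ≤ l.getD b 0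
  · -- the rows below `a` that are shorter than `c` lie below `b`
    have : G.card ≤ (Finset.Ioo b l.length).card := Finset.card_le_card fun i hi => by
      simp only [G, Finset.mem_filter, Finset.mem_range, Finset.mem_Ioo] at hi ⊢
      have : i ≤ b → l.getD b 0 ≤ l.getD i 0 := fun h => getD_antitone hs h
      omega
    rw [Nat.card_Ioo] at this
    omega
  · -- every row from `b` on is shorter than `c`
    have : (Finset.Ico b l.length).card ≤ G.card := Finset.card_le_card fun i hi => by
      simp only [G, Finset.mem_filter, Finset.mem_range, Finset.mem_Ico] at hi ⊢
      have : l.getD i 0 ≤ l.getD b 0 := getD_antitone hs hi.1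
      omega
    rw [Nat.card_Ico] at this
    omega

lemma exists_hookGap_eq (hs : l.Pairwise (· ≥ ·)) (ha : a < l.length) (hv : v < beta l a)
    (hvB : v ∉ betaSet l) : ∃ c, 1 ≤ c ∧ c ≤ l.getD a 0 ∧ hookGap l a c = v := by
  set gaps := (Finset.Icc 1 (l.getD a 0)).image (hookGap l a)
  set holes := Finset.range (beta l a) \ (Finset.Ioo a l.length).image (beta l)
  have hsub : gaps ⊆ holes := by
    simp only [gaps, holes, Finset.subset_iff, Finset.mem_image, Finset.mem_Icc,
      Finset.mem_sdiff, Finset.mem_range, forall_exists_index, and_imp]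
    rintro _ c hc1 hc rfl
    refine ⟨?_, fun ⟨b, hb, hbeq⟩ => hookGap_notMem_betaSet hs ha hc1 hc
      (mem_betaSet.2 ⟨b, (Finset.mem_Ioo.1 hb).2, hbeq⟩)⟩
    have := hook_add_hookGap ha hc1 hc
    have : 1 ≤ hook l a c := by unfold hook; omega
    omega
  have hgaps : gaps.card = l.getD a 0 := by
    have hmono : StrictMonoOn (hookGap l a) (Finset.Icc 1 (l.getD a 0)) :=
      fun c hc _ _ hcd => hookGap_lt_hookGap (Finset.mem_Icc.1 hc).1 hcd
    rw [Finset.card_image_of_injOn hmono.injOn, Nat.card_Icc, Nat.add_sub_cancel]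
  have hholes : holes.card = l.getD a 0 := by
    have hanti : StrictAntiOn (beta l) (Finset.Ioo a l.length) :=
      fun _ _ _ hc hbc => beta_lt_beta hs hbc (Finset.mem_Ioo.1 hc).2
    have hbelow : (Finset.Ioo a l.length).image (beta l) ⊆ Finset.range (beta l a) := by
      simp only [Finset.subset_iff, Finset.mem_image, Finset.mem_Ioo, Finset.mem_range,
        forall_exists_index, and_imp]
      rintro _ b hab hb rfl
      exact beta_lt_beta hs hab hb
    rw [Finset.card_sdiff_of_subset hbelow, Finset.card_range,
      Finset.card_image_of_injOn hanti.injOn, Nat.card_Ioo, beta]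
    omega
  have hv' : v ∈ holes := by
    simp only [holes, Finset.mem_sdiff, Finset.mem_range, Finset.mem_image, Finset.mem_Ioo,
      not_exists]
    exact ⟨hv, fun b hb => hvB (mem_betaSet.2 ⟨b, hb.1.2, hb.2⟩)⟩
  rw [← Finset.eq_of_subset_of_card_le hsub (by omega)] at hv'
  simpa [gaps, and_assoc] using hv'

lemma SubClosed.sub_mul_mem {s : Finset ℕ} (h : SubClosed ℓ s) (hx : x ∈ s) :
    ∀ k, k * ℓ ≤ x → x - k * ℓ ∈ s
  | 0, _ => by simpa using hx
  | k + 1, hk => by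
    rw [Nat.succ_mul] at hk ⊢
    rw [← Nat.sub_sub]
    exact h _ (h.sub_mul_mem hx k (by omega)) (by omega)

lemma SubClosed.mod_mem {s : Finset ℕ} (h : SubClosed ℓ s) (hx : x ∈ s) : x % ℓ ∈ s := by
  rw [Nat.mod_eq_sub_mul_div, mul_comm]
  exact h.sub_mul_mem hx _ (Nat.div_mul_le_self x ℓ)

theorem isCore_iff_subClosed (hs : l.Pairwise (· ≥ ·)) :
    IsCore ℓ l ↔ SubClosed ℓ (betaSet l) := by
  constructor
  · intro hcore x hx hℓx
    by_contra hgap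
    obtain ⟨a, ha, rfl⟩ := mem_betaSet.1 hx
    have hlt : beta l a - ℓ < beta l a := by
      rcases Nat.eq_zero_or_pos ℓ with rfl | hℓ
      · exact absurd hx (by simpa using hgap)
      · omega
    obtain ⟨c, hc1, hc, hgapc⟩ := exists_hookGap_eq hs ha hlt hgap
    have := hook_add_hookGap ha hc1 hc
    exact hcore a ha c hc1 hc ⟨1, by omega⟩
  · rintro hB a ha c hc1 hc ⟨k, hk⟩
    have := hook_add_hookGap ha hc1 hc
    refine hookGap_notMem_betaSet hs ha hc1 hc ?_
    have hmem := hB.sub_mul_mem (mem_betaSet.2 ⟨a, ha, rfl⟩) k (by rw [mul_comm]; omega)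
    rwa [show beta l a - k * ℓ = hookGap l a c by rw [mul_comm]; omega] at hmem

lemma residue_eq_bottomRes_iff (ha : a < l.length) :
    ((l.getD a 0 : ℤ) - (a + 1)) % ℓ = bottomRes ℓ l ↔
      beta l a ≡ beta l (l.length - 1) [MOD ℓ] := by
  have hrow : (l.getD a 0 : ℤ) - (a + 1) = beta l a - l.length := by unfold beta; omega
  have hbot : (l.getD (l.length - 1) 0 : ℤ) = beta l (l.length - 1) := by unfold beta; omega
  rw [bottomRes, hrow, hbot, ← Int.natCast_modEq_iff]
  exact ⟨fun h => by simpa using Int.ModEq.add_right (l.length : ℤ) h, fun h => h.sub_right _⟩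

lemma beta_last_le_beta (hs : l.Pairwise (· ≥ ·)) (hb : b < l.length) :
    beta l (l.length - 1) ≤ beta l b :=
  beta_le_beta hs (by omega) (by omega)

lemma not_modEq_beta_last_pred (hp : IsPartition l) (hB : SubClosed ℓ (betaSet l))
    (hx : x ∈ betaSet l) : ¬ x ≡ beta l (l.length - 1) - 1 [MOD ℓ] := by
  intro hmod
  obtain ⟨b, hb, -⟩ := mem_betaSet.1 hx
  obtain ⟨c, hc, hcx⟩ := mem_betaSet.1 (hB.mod_mem hx)
  have hmin := beta_last_le_beta hp.1 hc
  have hpos : 0 < beta l (l.length - 1) := by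
    have := getD_pos hp (show l.length - 1 < l.length by omega)
    unfold beta
    omega
  have : x % ℓ ≤ beta l (l.length - 1) - 1 := hmod ▸ Nat.mod_le _ _
  omega

theorem getD_succ_lt_getD (hp : IsPartition l) (hB : SubClosed ℓ (betaSet l))
    (ha : a < l.length) (hres : beta l a ≡ beta l (l.length - 1) [MOD ℓ]) :
    l.getD (a + 1) 0 < l.getD a 0 := by
  by_contra hle
  have hpos := getD_pos hp ha
  have heq : l.getD (a + 1) 0 = l.getD a 0 :=
    le_antisymm (getD_antitone hp.1 a.le_succ) (not_lt.1 hle)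
  have ha1 : a + 1 < l.length := by
    by_contra h
    rw [List.getD_eq_default _ _ (not_lt.1 h)] at heq
    omega
  have hlast := getD_pos hp (show l.length - 1 < l.length by omega)
  refine not_modEq_beta_last_pred hp hB (mem_betaSet.2 ⟨a + 1, ha1, rfl⟩)
    (Nat.ModEq.add_right_cancel' 1 ?_)
  rwa [show beta l (a + 1) + 1 = beta l a by unfold beta; omega,
    show beta l (l.length - 1) - 1 + 1 = beta l (l.length - 1) by unfold beta; omega]

def lowerBead (ℓ m x : ℕ) : ℕ := if x ≡ m [MOD ℓ] then x - 1 else x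

lemma lowerBead_sub (m : ℕ) (h : ℓ ≤ x) :
    lowerBead ℓ m (x - ℓ) = lowerBead ℓ m x - ℓ := by
  have hx : x - ℓ ≡ x [MOD ℓ] := by
    simpa [Nat.sub_add_cancel h] using (Nat.add_modEq_right (a := x - ℓ) (n := ℓ)).symm
  unfold lowerBead
  by_cases hm : x ≡ m [MOD ℓ]
  · rw [if_pos (hx.trans hm), if_pos hm]
    omega
  · rw [if_neg fun h' => hm (hx.symm.trans h'), if_neg hm]

lemma SubClosed.image_lowerBead {s : Finset ℕ} (h : SubClosed ℓ s) (m : ℕ) :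
    SubClosed ℓ (s.image (lowerBead ℓ m)) := by
  simp only [SubClosed, Finset.mem_image, forall_exists_index, and_imp]
  rintro _ x hx rfl hℓx
  have hℓ : ℓ ≤ x := hℓx.trans (by unfold lowerBead; split <;> omega)
  exact ⟨x - ℓ, h x hx hℓ, lowerBead_sub m hℓ⟩

def shrinkRow (ℓ : ℕ) (l : List ℕ) (a : ℕ) : ℕ :=
  if beta l a ≡ beta l (l.length - 1) [MOD ℓ] then l.getD a 0 - 1 else l.getD a 0

def shrink (ℓ : ℕ) (l : List ℕ) : List ℕ := (List.range l.length).map (shrinkRow ℓ l)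

lemma removeRes_eq_filter_shrink : removeRes ℓ l = (shrink ℓ l).filter (0 < ·) := by
  unfold removeRes shrink
  congr 1
  refine List.map_congr_left fun a ha => ?_
  simp only [shrinkRow, residue_eq_bottomRes_iff (List.mem_range.1 ha)]

@[simp] lemma length_shrink : (shrink ℓ l).length = l.length := by
  simp [shrink]

lemma getD_shrink (ha : a < l.length) : (shrink ℓ l).getD a 0 = shrinkRow ℓ l a := by
  simp [shrink, List.getD_eq_getElem?_getD, ha]

lemma shrinkRow_antitone (hp : IsPartition l) (hB : SubClosed ℓ (betaSet l)) :
    Antitone (shrinkRow ℓ l) := by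
  refine antitone_nat_of_succ_le fun a => ?_
  have hle : shrinkRow ℓ l (a + 1) ≤ l.getD (a + 1) 0 := by
    unfold shrinkRow
    split <;> omega
  refine hle.trans ?_
  rcases lt_or_ge a l.length with ha | ha
  · unfold shrinkRow
    split
    · next hres =>
      have := getD_succ_lt_getD hp hB ha hres
      omega
    · exact getD_antitone hp.1 a.le_succ
  · rw [List.getD_eq_default _ _ (show l.length ≤ a + 1 by omega)]
    exact Nat.zero_le _

lemma pairwise_shrink (hp : IsPartition l) (hB : SubClosed ℓ (betaSet l)) :
    (shrink ℓ l).Pairwise (· ≥ ·) :=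
  List.pairwise_map.2 (List.pairwise_lt_range.imp fun h => shrinkRow_antitone hp hB h.le)

lemma betaSet_shrink (hp : IsPartition l) :
    betaSet (shrink ℓ l) = (betaSet l).image (lowerBead ℓ (beta l (l.length - 1))) := by
  rw [betaSet, betaSet, Finset.image_image, length_shrink]
  refine Finset.image_congr fun a ha => ?_
  have ha : a < l.length := Finset.mem_range.1 ha
  have := getD_pos hp ha
  show (shrink ℓ l).getD a 0 + ((shrink ℓ l).length - 1 - a) = lowerBead ℓ _ (beta l a)
  rw [getD_shrink ha, length_shrink, shrinkRow, lowerBead]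
  by_cases hres : beta l a ≡ beta l (l.length - 1) [MOD ℓ]
  · rw [if_pos hres, if_pos hres, beta]
    omega
  · rw [if_neg hres, if_neg hres, beta]

lemma exists_filter_pos_eq_take {L : List ℕ} (hs : L.Pairwise (· ≥ ·)) :
    ∃ k ≤ L.length, L.filter (0 < ·) = L.take k ∧ ∀ b ≥ k, L.getD b 0 = 0 := by
  induction L with
  | nil => exact ⟨0, le_rfl, rfl, fun _ _ => rfl⟩
  | cons x L ih =>
    rw [List.pairwise_cons] at hs
    rcases Nat.eq_zero_or_pos x with rfl | hx
    · have hL : ∀ y ∈ L, y = 0 := fun y hy => Nat.le_zero.1 (hs.1 y hy)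
      refine ⟨0, Nat.zero_le _, ?_, fun b _ => ?_⟩
      · simpa [List.filter_eq_nil_iff] using fun y hy => (hL y hy).le
      · rcases b with _ | b
        · rfl
        · rw [List.getD_cons_succ, List.getD_eq_getElem?_getD]
          cases h : L[b]? with
          | none => rfl
          | some y => exact hL y (List.mem_of_getElem? h)
    · obtain ⟨k, hkL, hk, hzero⟩ := ih hs.2
      refine ⟨k + 1, by simpa using hkL, by simp [List.filter_cons_of_pos, hx, hk], ?_⟩
      rintro (_ | b) hb
      · omega
      · simpa using hzero b (by omega)

lemma isPartition_filter_pos {L : List ℕ} (hs : L.Pairwise (· ≥ ·)) :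
    IsPartition (L.filter (0 < ·)) :=
  ⟨hs.filter _, fun x hx => by simpa using (List.mem_filter.1 hx).2⟩

lemma SubClosed.betaSet_filter_pos {L : List ℕ} (hs : L.Pairwise (· ≥ ·))
    (h : SubClosed ℓ (betaSet L)) : SubClosed ℓ (betaSet (L.filter (0 < ·))) := by
  obtain ⟨k, hkL, hk, hzero⟩ := exists_filter_pos_eq_take hs
  have hlen : (L.take k).length = k := by simp [hkL]
  have hkept : ∀ a < k, beta (L.take k) a + (L.length - k) = beta L a := by
    intro a ha
    have hget : (L.take k).getD a 0 = L.getD a 0 := by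
      simp [List.getD_eq_getElem?_getD, ha]
    have hpos : 0 < (L.take k).getD a 0 := by
      rw [List.getD_eq_getElem?_getD, List.getElem?_eq_getElem (by omega), Option.getD_some]
      have hmem : (L.take k)[a] ∈ L.filter (0 < ·) := by
        rw [hk]
        exact List.getElem_mem _
      simpa using (List.mem_filter.1 hmem).2
    unfold beta
    omega
  rw [hk]
  intro x hx hℓx
  obtain ⟨a, ha, rfl⟩ := mem_betaSet.1 hx
  rw [hlen] at ha
  have ha' := hkept a ha
  obtain ⟨b, hb, hβb⟩ := mem_betaSet.1 (h _ (mem_betaSet.2 ⟨a, by omega, rfl⟩) (by omega))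
  have hbk : b < k := by
    by_contra hbk
    have : beta L b = L.length - 1 - b := by
      unfold beta
      rw [hzero b (by omega), Nat.zero_add]
    omega
  have := hkept b hbk
  exact mem_betaSet.2 ⟨b, by omega, by omega⟩

end BetaNumbers

open BetaNumbers

theorem stmt4_general (ℓ : ℕ) (l : List ℕ)
    (hp : IsPartition l) (hc : IsCore ℓ l) :
    (∀ a < l.length, ((l.getD a 0 : ℤ) - (a + 1)) % ℓ = bottomRes ℓ l →
        l.getD (a + 1) 0 < l.getD a 0) ∧
    IsPartition (removeRes ℓ l) ∧ IsCore ℓ (removeRes ℓ l) := by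
  have hB : SubClosed ℓ (betaSet l) := (isCore_iff_subClosed hp.1).1 hc
  have hshrink := pairwise_shrink hp hB
  have hB' : SubClosed ℓ (betaSet (shrink ℓ l)) := betaSet_shrink hp ▸ hB.image_lowerBead _
  rw [removeRes_eq_filter_shrink, isCore_iff_subClosed (hshrink.filter _)]
  exact ⟨fun a ha hres => getD_succ_lt_getD hp hB ha ((residue_eq_bottomRes_iff ha).1 hres),
    isPartition_filter_pos hshrink, hB'.betaSet_filter_pos hshrink⟩

/-- Every end-of-row box whose residue equals that of the bottom row's last box is
also at the end of its column (removable), and removing all such boxes again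
yields an ℓ-core. -/
theorem stmt4 (ℓ : ℕ) (hℓ : 2 ≤ ℓ) (l : List ℕ)
    (hp : IsPartition l) (hc : IsCore ℓ l) (hne : l ≠ []) :
    (∀ a < l.length, ((l.getD a 0 : ℤ) - (a + 1)) % ℓ = bottomRes ℓ l →
        l.getD (a + 1) 0 < l.getD a 0) ∧
    IsPartition (removeRes ℓ l) ∧ IsCore ℓ (removeRes ℓ l) :=
  stmt4_general ℓ l hp hc
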